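/- Let R be a strongly ℤ-graded ring with non-negative part P, let A be a k×k matrix over R, let m ∈ ℤ be suitable for A, and let n > m. Then the cokernel of μ(A,n) is a finitely generated projective R_0-module if and only if the cokernel of μ(A,m) is a finitely generated projective R_0-module (both cokernels regarded as R_0-modules by restriction of scalars along R_0 ⊆ P). -/

import Mathlib

open DirectSum CategoryTheory
universe u
section GradedPreamble

/-- A partition of unity of type `(n, -n)` in the `ℤ`-graded ring `R`:
a finite family `α₁, …, α_N ∈ R_n`, `β₁, …, β_N ∈ R_{-n}` with `∑ j, α j * β j = 1`. -/
def HasPartitionOfUnity {R : Type u} [Ring R] (𝒜 : ℤ → AddSubgroup R) (n : ℤ) : Prop :=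
  ∃ (N : ℕ) (α β : Fin N → R),
    (∀ j, α j ∈ 𝒜 n) ∧ (∀ j, β j ∈ 𝒜 (-n)) ∧ ∑ j, α j * β j = 1
open DirectSum CategoryTheory

variable {R : Type u} [Ring R] (𝒜 : ℤ → AddSubgroup R) [GradedRing 𝒜]

noncomputable def comp' (i : ℤ) : R →+ R :=
  ((𝒜 i).subtype).comp ((DFinsupp.evalAddMonoidHom i).comp
    (DirectSum.decomposeAddEquiv 𝒜).toAddMonoidHom)

lemma comp'_apply (i : ℤ) (x : R) : comp' 𝒜 i x = (DirectSum.decompose 𝒜 x i : R) := rfl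

theorem decompose_mul_vanish {a b : R} {c d : ℤ}
    (ha : ∀ i : ℤ, i < c → (DirectSum.decompose 𝒜 a i : R) = 0)
    (hb : ∀ i : ℤ, i < d → (DirectSum.decompose 𝒜 b i : R) = 0) :
    ∀ i : ℤ, i < c + d → (DirectSum.decompose 𝒜 (a * b) i : R) = 0 := by
  classical
  intro i hi
  have hae := (DirectSum.sum_support_decompose 𝒜 a).symm
  have hbe := (DirectSum.sum_support_decompose 𝒜 b).symm
  rw [← comp'_apply]
  conv_lhs => rw [hae, hbe]
  rw [Finset.sum_mul_sum]
  rw [map_sum]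
  refine Finset.sum_eq_zero ?_
  intro j hj
  rw [map_sum]
  refine Finset.sum_eq_zero ?_
  intro k hk
  rw [comp'_apply]
  have hjc : c ≤ j := by
    by_contra h
    push_neg at h
    exact (DFinsupp.mem_support_iff.mp hj) (Subtype.ext (ha j h))
  have hkd : d ≤ k := by
    by_contra h
    push_neg at h
    exact (DFinsupp.mem_support_iff.mp hk) (Subtype.ext (hb k h))
  have hmem : ((DirectSum.decompose 𝒜 a j : R) * (DirectSum.decompose 𝒜 b k : R)) ∈ 𝒜 (j + k) :=
    SetLike.mul_mem_graded (SetLike.coe_mem _) (SetLike.coe_mem _)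
  exact DirectSum.decompose_of_mem_ne 𝒜 hmem (by omega)

/-- The degree-zero subring `R₀ = R_0` of the `ℤ`-graded ring `R`. -/
def gradeZeroSubring : Subring R where
  carrier := 𝒜 0
  zero_mem' := zero_mem _
  one_mem' := SetLike.one_mem_graded 𝒜
  add_mem' := fun ha hb => add_mem ha hb
  neg_mem' := fun ha => neg_mem ha
  mul_mem' := fun ha hb => by simpa using SetLike.mul_mem_graded ha hb

/-- The non-negative part `P = ⨁_{k ≥ 0} R_k` of the `ℤ`-graded ring `R`:
the subring of elements whose homogeneous components in all negative degrees vanish. -/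
def nonnegSubring : Subring R where
  carrier := {x | ∀ i : ℤ, i < 0 → (DirectSum.decompose 𝒜 x i : R) = 0}
  zero_mem' := by intro i hi; simp
  one_mem' := by
    intro i hi
    exact DirectSum.decompose_of_mem_ne 𝒜 (SetLike.one_mem_graded 𝒜) (by omega)
  add_mem' := by intro a b ha hb i hi; rw [DirectSum.decompose_add]; simp [ha i hi, hb i hi]
  neg_mem' := by
    intro a ha i hi
    rw [DirectSum.decompose_neg, DFinsupp.neg_apply]
    push_cast [ha i hi]
    simp
  mul_mem' := by
    intro a b ha hb i hi
    exact decompose_mul_vanish 𝒜 ha hb i (by omega)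

/-- `T_m = ⨁_{k ≥ -m} R_k`, the left `R₀`-submodule of `R` of all elements whose
homogeneous components in degrees `< -m` vanish. -/
def trunc (m : ℤ) : Submodule ↥(gradeZeroSubring 𝒜) R where
  carrier := {x | ∀ i : ℤ, i < -m → (DirectSum.decompose 𝒜 x i : R) = 0}
  zero_mem' := by intro i hi; simp
  add_mem' := by intro a b ha hb i hi; rw [DirectSum.decompose_add]; simp [ha i hi, hb i hi]
  smul_mem' := by
    intro c x hx i hi
    have hc : ∀ i : ℤ, i < 0 → (DirectSum.decompose 𝒜 (c : R) i : R) = 0 := by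
      intro i hi
      exact DirectSum.decompose_of_mem_ne 𝒜 c.2 (by omega)
    have : (c • x : R) = (c : R) * x := rfl
    rw [this]
    exact decompose_mul_vanish 𝒜 hc hx i (by omega)

lemma mem_trunc {m : ℤ} {x : R} :
    x ∈ trunc 𝒜 m ↔ ∀ i : ℤ, i < -m → (DirectSum.decompose 𝒜 x i : R) = 0 := Iff.rfl

/-- The left multiplication map `μ(A, m) : P^k → (T_m)^k`, `v ↦ v·A`, associated with a
`k × k` matrix `A` over `R` all of whose entries have vanishing homogeneous components
in degrees `< -m`. -/
noncomputable def muMap (k : ℕ) (A : Matrix (Fin k) (Fin k) R) (m : ℤ)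
    (hA : ∀ i j, A i j ∈ trunc 𝒜 m) :
    (Fin k → ↥(trunc 𝒜 0)) →ₗ[↥(gradeZeroSubring 𝒜)] (Fin k → ↥(trunc 𝒜 m)) where
  toFun v := fun j => ⟨∑ i, (v i : R) * A i j, by
    refine sum_mem ?_
    intro i _
    intro d hd
    exact decompose_mul_vanish 𝒜 (c := 0) (d := -m) (fun e he => (v i).2 e (by omega)) (hA i j) d (by omega)⟩
  map_add' v w := by
    funext j
    apply Subtype.ext
    simp [add_mul, Finset.sum_add_distrib]
  map_smul' c v := by
    funext j
    apply Subtype.ext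
    simp only [RingHom.id_apply, Pi.smul_apply]
    have hs : ∀ r : R, c • r = (c : R) * r := fun r => rfl
    simp [hs, Finset.mul_sum, mul_assoc]
end GradedPreamble

/-!
Since `T_m ⊆ T_n` is the kernel of the projection of `T_n` onto `⨁_{-n ≤ d < -m} R_d` and
`μ(A,n)` is `μ(A,m)` followed by this inclusion, there is a short exact sequence
`0 → coker μ(A,m) → coker μ(A,n) → (⨁_{-n ≤ d < -m} R_d)^k → 0`.
In a strongly graded ring each `R_d` is a direct summand of a finite free `R₀`-module: for a
partition of unity `∑ α_j β_j = 1` of type `(-d, d)`, the map `x ↦ (x α_j)_j` is split by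
`c ↦ ∑ c_j β_j`. So the sequence splits, and `coker μ(A,n) ≅ coker μ(A,m) × (⨁ R_d)^k`.
-/

namespace Module

instance Projective.pi_of_fintype {R ι : Type*} [Ring R] [Fintype ι] [DecidableEq ι]
    (M : ι → Type*) [∀ i, AddCommGroup (M i)] [∀ i, Module R (M i)]
    [∀ i, Projective R (M i)] : Projective R (∀ i, M i) :=
  .of_equiv (DirectSum.linearEquivFunOnFintype R ι M)

variable {R M Q : Type*} [Ring R] [AddCommGroup M] [AddCommGroup Q] [Module R M] [Module R Q]

theorem finite_projective_prod_iff_left [Module.Finite R Q] [Projective R Q] :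
    (Module.Finite R (M × Q) ∧ Projective R (M × Q)) ↔ (Module.Finite R M ∧ Projective R M) :=
  ⟨fun ⟨_, _⟩ => ⟨.of_surjective (LinearMap.fst R M Q) Prod.fst_surjective,
      .of_split (LinearMap.inl R M Q) (LinearMap.fst R M Q) (LinearMap.fst_comp_inl R M Q)⟩,
    fun ⟨_, _⟩ => ⟨inferInstance, inferInstance⟩⟩

end Module

namespace Submodule

open LinearMap

variable {R M N P : Type*} [Ring R] [AddCommGroup M] [AddCommGroup N] [AddCommGroup P]
  [Module R M] [Module R N] [Module R P] (f : P →ₗ[R] M) {φ : M →ₗ[R] N}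

theorem mapQ_range_comp_injective (hφ : Function.Injective φ) :
    Function.Injective (mapQ (range f) (range (φ ∘ₗ f)) φ fun _ ⟨p, hp⟩ => ⟨p, congrArg φ hp⟩) := by
  rw [← ker_eq_bot, ker_mapQ, range_comp, comap_map_eq_of_injective hφ, mkQ_map_self]

end Submodule

namespace Function.Exact

theorem piMap {ι : Type*} {A B C : ι → Type*} [∀ i, Zero (C i)] {f : ∀ i, A i → B i}
    {g : ∀ i, B i → C i} (h : ∀ i, Exact (f i) (g i)) : Exact (Pi.map f) (Pi.map g) := by
  intro y
  rw [Set.range_piMap, Set.mem_univ_pi, funext_iff]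
  exact forall_congr' fun i => h i (y i)

variable {R M N P Q : Type*} [Ring R] [AddCommGroup M] [AddCommGroup N] [AddCommGroup P]
  [AddCommGroup Q] [Module R M] [Module R N] [Module R P] [Module R Q]

theorem finite_projective_iff [Module.Finite R Q] [Module.Projective R Q] {φ : M →ₗ[R] N}
    {ψ : N →ₗ[R] Q} (h : Exact φ ψ) (hφ : Injective φ) (hψ : Surjective ψ) :
    (Module.Finite R N ∧ Module.Projective R N) ↔ (Module.Finite R M ∧ Module.Projective R M) := by
  obtain ⟨l, hl⟩ := ψ.exists_rightInverse_of_surjective (LinearMap.range_eq_top.mpr hψ)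
  have e : N ≃ₗ[R] M × Q := (h.splitSurjectiveEquiv hφ ⟨l, hl⟩).1
  calc _ ↔ Module.Finite R (M × Q) ∧ Module.Projective R (M × Q) :=
        and_congr (Module.Finite.equiv_iff e)
          ⟨fun (_ : Module.Projective R N) => .of_equiv e,
            fun (_ : Module.Projective R (M × Q)) => .of_equiv e.symm⟩
    _ ↔ _ := Module.finite_projective_prod_iff_left

open Submodule LinearMap

variable (f : P →ₗ[R] M) {φ : M →ₗ[R] N} {ψ : N →ₗ[R] Q}

theorem range_comp_le_ker (h : Exact φ ψ) : range (φ ∘ₗ f) ≤ ker ψ :=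
  h.linearMap_ker_eq ▸ range_comp_le_range f φ

theorem exact_mapQ_liftQ_range_comp (h : Exact φ ψ) :
    Exact (mapQ (range f) (range (φ ∘ₗ f)) φ fun _ ⟨p, hp⟩ => ⟨p, congrArg φ hp⟩)
      ((range (φ ∘ₗ f)).liftQ ψ (h.range_comp_le_ker f)) := by
  intro x
  obtain ⟨y, rfl⟩ := mkQ_surjective _ x
  constructor
  · intro hy
    obtain ⟨x, rfl⟩ := (h y).mp hy
    exact ⟨mkQ _ x, rfl⟩
  · rintro ⟨z, hz⟩
    obtain ⟨x, rfl⟩ := mkQ_surjective _ z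
    rw [← hz]
    exact h.apply_apply_eq_zero x

theorem finite_projective_quotient_range_comp_iff [Module.Finite R Q] [Module.Projective R Q]
    (h : Exact φ ψ) (hφ : Injective φ) (hψ : Surjective ψ) :
    (Module.Finite R (N ⧸ range (φ ∘ₗ f)) ∧ Module.Projective R (N ⧸ range (φ ∘ₗ f))) ↔
      (Module.Finite R (M ⧸ range f) ∧ Module.Projective R (M ⧸ range f)) :=
  (h.exact_mapQ_liftQ_range_comp f).finite_projective_iff (mapQ_range_comp_injective f hφ)
    fun q => (hψ q).elim fun y hy => ⟨mkQ _ y, hy⟩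

end Function.Exact

section Graded

variable {R : Type u} [Ring R] (𝒜 : ℤ → AddSubgroup R) [GradedRing 𝒜]

theorem mem_gradeZeroSubring {x : R} : x ∈ gradeZeroSubring 𝒜 ↔ x ∈ 𝒜 0 := Iff.rfl

theorem trunc_mono {m n : ℤ} (h : m ≤ n) : trunc 𝒜 m ≤ trunc 𝒜 n :=
  fun _ hx i hi => hx i (by omega)

theorem mem_trunc_of_mem {n d : ℤ} (hd : -n ≤ d) {x : R} (hx : x ∈ 𝒜 d) : x ∈ trunc 𝒜 n :=
  fun _ hi => decompose_of_mem_ne 𝒜 hx (by omega)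

def gradeSubmodule (d : ℤ) : Submodule (gradeZeroSubring 𝒜) R where
  carrier := 𝒜 d
  add_mem' := add_mem
  zero_mem' := zero_mem _
  smul_mem' c x hx := by
    simpa [Subring.smul_def] using SetLike.mul_mem_graded ((mem_gradeZeroSubring 𝒜).mp c.2) hx

theorem mem_gradeSubmodule {d : ℤ} {x : R} : x ∈ gradeSubmodule 𝒜 d ↔ x ∈ 𝒜 d := Iff.rfl

theorem finite_projective_gradeSubmodule {d : ℤ} (h : HasPartitionOfUnity 𝒜 (-d)) :
    Module.Finite (gradeZeroSubring 𝒜) (gradeSubmodule 𝒜 d) ∧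
      Module.Projective (gradeZeroSubring 𝒜) (gradeSubmodule 𝒜 d) := by
  obtain ⟨N, α, β, hα, hβ, hαβ⟩ := h
  rw [neg_neg] at hβ
  let g := Fintype.linearCombination (gradeZeroSubring 𝒜)
    fun j => (⟨β j, hβ j⟩ : gradeSubmodule 𝒜 d)
  let f : gradeSubmodule 𝒜 d →ₗ[gradeZeroSubring 𝒜] Fin N → gradeZeroSubring 𝒜 :=
    { toFun x j := ⟨x * α j, (mem_gradeZeroSubring 𝒜).mpr <| by
        simpa using SetLike.mul_mem_graded ((mem_gradeSubmodule 𝒜).mp x.2) (hα j)⟩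
      map_add' x y := by ext; simp [add_mul]
      map_smul' c x := by ext; simp [Subring.smul_def, mul_assoc] }
  have hgf : g ∘ₗ f = LinearMap.id := by
    ext x
    simp [g, f, Fintype.linearCombination_apply, Subring.smul_def, mul_assoc, ← Finset.mul_sum, hαβ]
  exact ⟨.of_surjective g fun x => ⟨f x, congr($hgf x)⟩, .of_split f g hgf⟩

def gradeProj (d : ℤ) : R →ₗ[gradeZeroSubring 𝒜] gradeSubmodule 𝒜 d where
  toFun x := ⟨decompose 𝒜 x d, (decompose 𝒜 x d).2⟩
  map_add' x y := by ext; simp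
  map_smul' c x := Subtype.ext <| coe_decompose_mul_of_left_mem_zero 𝒜 c.2

def truncProj (m n : ℤ) :
    trunc 𝒜 n →ₗ[gradeZeroSubring 𝒜] ∀ d : Finset.Ico (-n) (-m), gradeSubmodule 𝒜 d :=
  LinearMap.pi fun d => gradeProj 𝒜 d ∘ₗ (trunc 𝒜 n).subtype

theorem coe_truncProj_apply (m n : ℤ) (x : trunc 𝒜 n) (d : Finset.Ico (-n) (-m)) :
    (truncProj 𝒜 m n x d : R) = decompose 𝒜 (x : R) d := rfl

theorem truncProj_surjective (m n : ℤ) : Function.Surjective (truncProj 𝒜 m n) := by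
  intro c
  refine ⟨⟨∑ d, (c d : R), sum_mem fun d _ =>
    mem_trunc_of_mem 𝒜 (Finset.mem_Ico.mp d.2).1 ((mem_gradeSubmodule 𝒜).mp (c d).2)⟩, ?_⟩
  ext d
  rw [coe_truncProj_apply, ← GradedRing.proj_apply, map_sum, Finset.sum_eq_single d]
  · exact decompose_of_mem_same 𝒜 (c d).2
  · intro e _ hne
    exact decompose_of_mem_ne 𝒜 (c e).2 (Subtype.coe_injective.ne hne)
  · simp

theorem exact_inclusion_truncProj {m n : ℤ} (h : m ≤ n) :
    Function.Exact (Submodule.inclusion (trunc_mono 𝒜 h)) (truncProj 𝒜 m n) := by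
  rw [LinearMap.exact_iff, Submodule.range_inclusion]
  ext x
  simp only [LinearMap.mem_ker, Submodule.mem_comap, Submodule.subtype_apply, mem_trunc]
  constructor
  · intro hx i hi
    by_cases hin : i < -n
    · exact x.2 i hin
    · exact congr($hx ⟨i, Finset.mem_Ico.mpr ⟨by omega, hi⟩⟩)
  · intro hx
    ext d
    exact hx d (Finset.mem_Ico.mp d.2).2

end Graded

/-- **Corollary.**  Let `R` be a strongly `ℤ`-graded ring, `A` a `k × k` matrix over
`R`, `m` suitable for `A`, and `n > m`.  Then `coker μ(A,n)` is a finitely generated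
projective `R₀`-module if and only if `coker μ(A,m)` is. -/
theorem coker_muMap_fg_projective_iff {R : Type u} [Ring R]
    (𝒜 : ℤ → AddSubgroup R) [GradedRing 𝒜]
    (hstrong : ∀ n : ℤ, HasPartitionOfUnity 𝒜 n)
    (k : ℕ) (A : Matrix (Fin k) (Fin k) R) (m n : ℤ) (hmn : m < n)
    (hA : ∀ i j, A i j ∈ trunc 𝒜 m) :
    (Module.Finite ↥(gradeZeroSubring 𝒜)
        ((Fin k → ↥(trunc 𝒜 n)) ⧸
          LinearMap.range (muMap 𝒜 k A n (fun i j e he => hA i j e (by omega)))) ∧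
      Module.Projective ↥(gradeZeroSubring 𝒜)
        ((Fin k → ↥(trunc 𝒜 n)) ⧸
          LinearMap.range (muMap 𝒜 k A n (fun i j e he => hA i j e (by omega))))) ↔
    (Module.Finite ↥(gradeZeroSubring 𝒜)
        ((Fin k → ↥(trunc 𝒜 m)) ⧸ LinearMap.range (muMap 𝒜 k A m hA)) ∧
      Module.Projective ↥(gradeZeroSubring 𝒜)
        ((Fin k → ↥(trunc 𝒜 m)) ⧸ LinearMap.range (muMap 𝒜 k A m hA))) := by
  have hle := trunc_mono 𝒜 hmn.le
  have hgrade (d : ℤ) := finite_projective_gradeSubmodule 𝒜 (hstrong (-d))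
  have (d : ℤ) := (hgrade d).1
  have (d : ℤ) := (hgrade d).2
  have hμ : muMap 𝒜 k A n (fun i j e he => hA i j e (by omega)) =
      LinearMap.piMap (fun _ => Submodule.inclusion hle) ∘ₗ muMap 𝒜 k A m hA := rfl
  have hexact : Function.Exact (LinearMap.piMap fun _ : Fin k => Submodule.inclusion hle)
      (LinearMap.piMap fun _ : Fin k => truncProj 𝒜 m n) :=
    .piMap fun _ => exact_inclusion_truncProj 𝒜 hmn.le
  rw [hμ]
  exact hexact.finite_projective_quotient_range_comp_iff _
    (.piMap fun _ => Submodule.inclusion_injective hle) (.piMap fun _ => truncProj_surjective 𝒜 m n)
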